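/- Let 0 < a ≤ 1/2, q(s) = (a/2)s² − s + 1 and s* = (1 − √(1 − 2a))/a. Define the Steffensen correction Δ_S(s) = −q(s)/(q'(s) + (a/2)q(s)) and the Newton correction Δ_N(s) = −q(s)/q'(s). Then for every s ∈ [0, s*), 0 ≤ Δ_N(s) ≤ Δ_S(s), and Δ_S(s*) = 0. -/

import Mathlib

/-!
Write `d = 1 - a s = -q'(s)` and `r = √(1 - 2a)`. Completing the square gives
`2a q(s) = d² - r²`, and `s < s*` is exactly `d > r`, so `q(s) > 0` on `[0, s*)`.
Then `Δ_N = q/d` and `Δ_S = q/(d - (a/2) q)` have the same positive numerator, and the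
Steffensen denominator is the smaller one; it stays positive because
`4 (d - (a/2) q) = d (4 - d) + r²` with `0 < d ≤ 1`.
-/

open Real

noncomputable def adimQuad (a s : ℝ) : ℝ := a / 2 * s ^ 2 - s + 1

theorem hasDerivAt_adimQuad (a s : ℝ) : HasDerivAt (adimQuad a) (a * s - 1) s := by
  have h := (((hasDerivAt_pow 2 s).const_mul (a / 2)).sub (hasDerivAt_id s)).add_const 1
  exact h.congr_deriv (by norm_num; ring)

theorem deriv_adimQuad (a s : ℝ) : deriv (adimQuad a) s = a * s - 1 :=
  (hasDerivAt_adimQuad a s).deriv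

theorem two_mul_mul_adimQuad (a s : ℝ) :
    2 * a * adimQuad a s = (1 - a * s) ^ 2 - (1 - 2 * a) := by
  unfold adimQuad; ring

theorem adimQuad_smallestRoot {a : ℝ} (ha : 0 < a) (ha' : a ≤ 1 / 2) :
    adimQuad a ((1 - √(1 - 2 * a)) / a) = 0 := by
  have hr : √(1 - 2 * a) ^ 2 = 1 - 2 * a := sq_sqrt (by linarith)
  have h := two_mul_mul_adimQuad a ((1 - √(1 - 2 * a)) / a)
  rw [mul_div_cancel₀ _ ha.ne', sub_sub_cancel, hr, sub_self] at h
  simpa [ha.ne'] using h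

theorem sqrt_lt_one_sub_mul_of_lt_smallestRoot {a s : ℝ} (ha : 0 < a)
    (hs : s < (1 - √(1 - 2 * a)) / a) :
    √(1 - 2 * a) < 1 - a * s := by
  rw [lt_div_iff₀ ha] at hs
  linarith

theorem adimQuad_pos_of_lt_smallestRoot {a s : ℝ} (ha : 0 < a) (ha' : a ≤ 1 / 2)
    (hs : s < (1 - √(1 - 2 * a)) / a) :
    0 < adimQuad a s := by
  have hd := sqrt_lt_one_sub_mul_of_lt_smallestRoot ha hs
  have hr : √(1 - 2 * a) ^ 2 = 1 - 2 * a := sq_sqrt (by linarith)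
  have h2 : 0 < 2 * a * adimQuad a s := by
    rw [two_mul_mul_adimQuad, ← hr, sub_pos]
    exact pow_lt_pow_left₀ hd (sqrt_nonneg _) two_ne_zero
  exact pos_of_mul_pos_right h2 (by linarith)

theorem sub_mul_adimQuad_pos_of_lt_smallestRoot {a s : ℝ} (ha : 0 < a) (ha' : a ≤ 1 / 2)
    (hs₀ : 0 ≤ s) (hs : s < (1 - √(1 - 2 * a)) / a) :
    0 < (1 - a * s) - a / 2 * adimQuad a s := by
  have hd := sqrt_lt_one_sub_mul_of_lt_smallestRoot ha hs
  have hd₁ : 1 - a * s ≤ 1 := by linarith [mul_nonneg ha.le hs₀]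
  have hr : √(1 - 2 * a) ^ 2 = 1 - 2 * a := sq_sqrt (by linarith)
  have key : 4 * ((1 - a * s) - a / 2 * adimQuad a s)
      = (1 - a * s) * (4 - (1 - a * s)) + √(1 - 2 * a) ^ 2 := by
    linear_combination -two_mul_mul_adimQuad a s - hr
  have : 0 < (1 - a * s) * (4 - (1 - a * s)) :=
    mul_pos (lt_of_le_of_lt (sqrt_nonneg _) hd) (by linarith)
  linarith [sq_nonneg √(1 - 2 * a)]

/-- **Comparison of the Steffensen and Newton corrections for the adimensional quadratic.**
Let `0 < a ≤ 1/2`, `q(s) = (a/2)s² − s + 1` and `s* = (1 − √(1 − 2a))/a`.  With the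
Steffensen correction `Δ_S(s) = −q(s)/(q'(s) + (a/2)q(s))` and the Newton correction
`Δ_N(s) = −q(s)/q'(s)`, for every `s ∈ [0, s*)` one has `0 ≤ Δ_N(s) ≤ Δ_S(s)`,
and `Δ_S(s*) = 0`. -/
theorem stmt_10 (a : ℝ) (ha : 0 < a) (ha' : a ≤ 1 / 2)
    (q : ℝ → ℝ) (hq : q = fun s => a / 2 * s ^ 2 - s + 1)
    (sstar : ℝ) (hsstar : sstar = (1 - Real.sqrt (1 - 2 * a)) / a)
    (ΔS ΔN : ℝ → ℝ)
    (hΔS : ΔS = fun s => -q s / (deriv q s + a / 2 * q s))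
    (hΔN : ΔN = fun s => -q s / deriv q s) :
    (∀ s ∈ Set.Ico (0 : ℝ) sstar, 0 ≤ ΔN s ∧ ΔN s ≤ ΔS s) ∧ ΔS sstar = 0 := by
  have hq' : q = adimQuad a := hq
  subst hq' hΔS hΔN hsstar
  simp only [deriv_adimQuad]
  refine ⟨fun s ⟨hs₀, hs⟩ => ?_, by simp [adimQuad_smallestRoot ha ha']⟩
  have hp := adimQuad_pos_of_lt_smallestRoot ha ha' hs
  have hS := sub_mul_adimQuad_pos_of_lt_smallestRoot ha ha' hs₀ hs
  have hN : a * s - 1 < 0 := by linarith [mul_pos ha hp]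
  refine ⟨div_nonneg_of_nonpos (by linarith) hN.le, ?_⟩
  calc -adimQuad a s / (a * s - 1) = adimQuad a s / (1 - a * s) := by
        rw [← neg_div_neg_eq, neg_neg, neg_sub]
    _ ≤ adimQuad a s / (1 - a * s - a / 2 * adimQuad a s) :=
        div_le_div_of_nonneg_left hp.le hS (by linarith [mul_pos ha hp])
    _ = -adimQuad a s / (a * s - 1 + a / 2 * adimQuad a s) := by
        rw [← neg_div_neg_eq (adimQuad a s)]; congr 1; ring
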